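/- arXiv:1701.02789 — 6 statements merged into one kernel-verified Lean document; each statement's English description precedes it below -/
import Mathlib

section
/- (Bias of the clipped importance-sampling estimator.) Suppose η > 0 and ε > 0 satisfy P({ω : r(ω) > η}) ≤ ε/2. Then ∫ Y·r·1{r ≤ η} dQ ≤ ∫ Y dP ≤ ∫ Y·r·1{r ≤ η} dQ + ε/2. -/
/-!
Since `r` is a density of `P` with respect to `Q`, `∫ f dP = ∫ f·r dQ` for every `f`, so the clipped
integral is `∫_{r ≤ η} Y dP`. It therefore differs from `∫ Y dP` by `∫_{r > η} Y dP`, which lies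
between `0` and `P(r > η) ≤ ε/2` because `0 ≤ Y ≤ 1`.
-/

open MeasureTheory

section DensityOfSetIntegrals

variable {Ω : Type*} [MeasurableSpace Ω] {P Q : Measure Ω} {r : Ω → ℝ}

lemma integrable_of_toReal_measure_eq_setIntegral [IsFiniteMeasure P] [NeZero P]
    (hPQ : ∀ A, MeasurableSet A → (P A).toReal = ∫ ω in A, r ω ∂Q) : Integrable r Q := by
  by_contra hr
  have hP_univ := hPQ Set.univ MeasurableSet.univ
  rw [setIntegral_univ, integral_undef hr, ENNReal.toReal_eq_zero_iff] at hP_univ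
  simp [NeZero.ne P] at hP_univ

lemma eq_withDensity_of_toReal_measure_eq_setIntegral [IsFiniteMeasure P] [NeZero P]
    (hr_nonneg : ∀ ω, 0 ≤ r ω)
    (hPQ : ∀ A, MeasurableSet A → (P A).toReal = ∫ ω in A, r ω ∂Q) :
    P = Q.withDensity fun ω => ENNReal.ofReal (r ω) := by
  ext A hA
  have hr_int := (integrable_of_toReal_measure_eq_setIntegral hPQ).integrableOn (s := A)
  rw [withDensity_apply _ hA, ← ofReal_integral_eq_lintegral_ofReal hr_int (.of_forall hr_nonneg),
    ← hPQ A hA, ENNReal.ofReal_toReal (measure_ne_top P A)]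

lemma integral_eq_integral_mul_of_toReal_measure_eq_setIntegral [IsFiniteMeasure P] [NeZero P]
    (hr_meas : Measurable r) (hr_nonneg : ∀ ω, 0 ≤ r ω)
    (hPQ : ∀ A, MeasurableSet A → (P A).toReal = ∫ ω in A, r ω ∂Q) (f : Ω → ℝ) :
    ∫ ω, f ω ∂P = ∫ ω, f ω * r ω ∂Q := by
  rw [eq_withDensity_of_toReal_measure_eq_setIntegral hr_nonneg hPQ]
  change ∫ ω, f ω ∂Q.withDensity (fun ω => ((r ω).toNNReal : ENNReal)) = _
  rw [integral_withDensity_eq_integral_smul hr_meas.real_toNNReal]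
  simp_rw [NNReal.smul_def, smul_eq_mul, Real.coe_toNNReal _ (hr_nonneg _), mul_comm]

end DensityOfSetIntegrals

lemma integral_le_setIntegral_add_measureReal_compl {Ω : Type*} [MeasurableSpace Ω]
    {μ : Measure Ω} [IsFiniteMeasure μ] {f : Ω → ℝ} {s : Set Ω} (hs : MeasurableSet s)
    (hf : Integrable f μ) (hf_le_one : ∀ ω, f ω ≤ 1) :
    ∫ ω, f ω ∂μ ≤ ∫ ω in s, f ω ∂μ + μ.real sᶜ := by
  have h_compl : ∫ ω in sᶜ, f ω ∂μ ≤ μ.real sᶜ := by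
    simpa using setIntegral_mono hf.integrableOn (integrable_const (1 : ℝ)).integrableOn hf_le_one
  linarith [integral_add_compl hs hf]

theorem stmt1_general {Ω : Type*} [MeasurableSpace Ω]
    (P Q : Measure Ω) [IsProbabilityMeasure P] [IsProbabilityMeasure Q]
    (r : Ω → ℝ) (hr_meas : Measurable r) (hr_nonneg : ∀ ω, 0 ≤ r ω)
    (hPQ : ∀ A : Set Ω, MeasurableSet A → (P A).toReal = ∫ ω in A, r ω ∂Q)
    (Y : Ω → ℝ) (hY_meas : Measurable Y)
    (hY0 : ∀ ω, 0 ≤ Y ω) (hY1 : ∀ ω, Y ω ≤ 1)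
    (η ε : ℝ)
    (htail : (P {ω | η < r ω}).toReal ≤ ε / 2) :
    ∫ ω, (if r ω ≤ η then Y ω * r ω else 0) ∂Q ≤ ∫ ω, Y ω ∂P ∧
    ∫ ω, Y ω ∂P ≤ (∫ ω, (if r ω ≤ η then Y ω * r ω else 0) ∂Q) + ε / 2 := by
  set t := {ω | r ω ≤ η}
  have ht : MeasurableSet t := measurableSet_le hr_meas measurable_const
  have h_clipped : ∫ ω, (if r ω ≤ η then Y ω * r ω else 0) ∂Q = ∫ ω in t, Y ω ∂P := by
    rw [← integral_indicator ht,
      integral_eq_integral_mul_of_toReal_measure_eq_setIntegral hr_meas hr_nonneg hPQ]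
    congr 1 with ω
    by_cases h : r ω ≤ η <;> simp [t, h]
  have ht_compl : tᶜ = {ω | η < r ω} := by ext; simp [t]
  have hY_int : Integrable Y P :=
    .of_bound hY_meas.aestronglyMeasurable 1
      (.of_forall fun ω => by rw [Real.norm_of_nonneg (hY0 ω)]; exact hY1 ω)
  rw [h_clipped]
  refine ⟨setIntegral_le_integral hY_int (.of_forall hY0), ?_⟩
  have h_split := integral_le_setIntegral_add_measureReal_compl ht hY_int hY1
  rw [ht_compl, measureReal_def] at h_split
  linarith

/-- Bias of the clipped importance-sampling estimator: if `P(r > η) ≤ ε/2` then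
`∫ Y·r·1{r ≤ η} dQ ≤ ∫ Y dP ≤ ∫ Y·r·1{r ≤ η} dQ + ε/2`. -/
theorem stmt1 {Ω : Type*} [MeasurableSpace Ω]
    (P Q : Measure Ω) [IsProbabilityMeasure P] [IsProbabilityMeasure Q]
    (r : Ω → ℝ) (hr_meas : Measurable r) (hr_nonneg : ∀ ω, 0 ≤ r ω)
    (hPQ : ∀ A : Set Ω, MeasurableSet A → (P A).toReal = ∫ ω in A, r ω ∂Q)
    (Y : Ω → ℝ) (hY_meas : Measurable Y)
    (hY0 : ∀ ω, 0 ≤ Y ω) (hY1 : ∀ ω, Y ω ≤ 1)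
    (η ε : ℝ) (hη : 0 < η) (hε : 0 < ε)
    (htail : (P {ω | η < r ω}).toReal ≤ ε / 2) :
    ∫ ω, (if r ω ≤ η then Y ω * r ω else 0) ∂Q ≤ ∫ ω, Y ω ∂P ∧
    ∫ ω, Y ω ∂P ≤ (∫ ω, (if r ω ≤ η then Y ω * r ω else 0) ∂Q) + ε / 2 :=
  stmt1_general P Q r hr_meas hr_nonneg hPQ Y hY_meas hY0 hY1 η ε htail
end

section
/- (Concentration of the clipped importance-sampling estimator.) Suppose η > 0 and ε > 0 satisfy P({ω : r(ω) > η}) ≤ ε/2. Let μ = ∫ Y dP and define W_s = Y(X_s)·r(X_s)·1{r(X_s) ≤ η} for s = 1,…,t. Then for every δ > 0, the probability of the event { μ − δ − ε/2 ≤ (1/t)·Σ_{s=1}^t W_s ≤ μ + δ } is at least 1 − 2·exp(−δ²·t/(2η²)). -/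
/-!
The clipped weights `W_s = Y(X_s) r(X_s) 1{r(X_s) ≤ η}` are independent, take values in `[0, η]`
and all have mean `m = ∫ W dQ`, so Hoeffding's inequality keeps their average within `δ` of `m`
outside an event of probability `2 exp(-2tδ²/η²) ≤ 2 exp(-tδ²/(2η²))`. Since `dP = r dQ`,
clipping can only lower the mean, `m ≤ ∫ Y dP`, and it loses at most
`∫_{r > η} Y r dQ ≤ P(r > η) ≤ ε/2`.
-/

open MeasureTheory ProbabilityTheory Real

section Hoeffding

variable {Ω ι : Type*} [MeasurableSpace Ω] {μ : Measure Ω} [IsProbabilityMeasure μ]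
  [Fintype ι] {Z : ι → Ω → ℝ} {a b : ℝ}

lemma measureReal_sum_sub_integral_ge_le_of_mem_Icc (h_indep : iIndepFun Z μ)
    (hZ : ∀ i, Measurable (Z i)) (hab : ∀ i ω, Z i ω ∈ Set.Icc a b) {ε : ℝ} (hε : 0 ≤ ε) :
    μ.real {ω | ε ≤ ∑ i, (Z i ω - μ[Z i])} ≤
      exp (-2 * ε ^ 2 / (Fintype.card ι * (b - a) ^ 2)) := by
  have h_subG : ∀ i ∈ Finset.univ,
      HasSubgaussianMGF (fun ω ↦ Z i ω - μ[Z i]) ((‖b - a‖₊ / 2) ^ 2) μ := fun i _ ↦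
    hasSubgaussianMGF_of_mem_Icc (hZ i).aemeasurable (ae_of_all _ (hab i))
  have h_indep' : iIndepFun (fun i ω ↦ Z i ω - μ[Z i]) μ :=
    h_indep.comp (fun i y ↦ y - ∫ ω, Z i ω ∂μ) fun _ ↦ measurable_id.sub_const _
  refine (HasSubgaussianMGF.measure_sum_ge_le_of_iIndepFun h_indep' h_subG hε).trans_eq ?_
  push_cast
  rw [Finset.sum_const, Finset.card_univ, nsmul_eq_mul, Real.norm_eq_abs, div_pow, sq_abs]
  congr 1
  rw [show (2 : ℝ) * (Fintype.card ι * ((b - a) ^ 2 / 2 ^ 2)) = Fintype.card ι * (b - a) ^ 2 / 2 by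
    ring, div_div_eq_mul_div]
  ring

lemma measureReal_sum_sub_integral_le_neg_le_of_mem_Icc (h_indep : iIndepFun Z μ)
    (hZ : ∀ i, Measurable (Z i)) (hab : ∀ i ω, Z i ω ∈ Set.Icc a b) {ε : ℝ} (hε : 0 ≤ ε) :
    μ.real {ω | ∑ i, (Z i ω - μ[Z i]) ≤ -ε} ≤
      exp (-2 * ε ^ 2 / (Fintype.card ι * (b - a) ^ 2)) := by
  have h_neg := measureReal_sum_sub_integral_ge_le_of_mem_Icc (Z := fun i ω ↦ -Z i ω)
    (a := -b) (b := -a) (h_indep.comp (fun _ x ↦ -x) fun _ ↦ measurable_neg) (fun i ↦ (hZ i).neg)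
    (fun i ω ↦ ⟨neg_le_neg (hab i ω).2, neg_le_neg (hab i ω).1⟩) hε
  convert h_neg using 3
  · ext ω
    simp only [integral_neg, neg_sub_neg, ← neg_sub (Z _ ω), Finset.sum_neg_distrib, le_neg]
  · ring

theorem measureReal_abs_sum_sub_integral_lt_ge_of_mem_Icc (h_indep : iIndepFun Z μ)
    (hZ : ∀ i, Measurable (Z i)) (hab : ∀ i ω, Z i ω ∈ Set.Icc a b) {ε : ℝ} (hε : 0 ≤ ε) :
    1 - 2 * exp (-2 * ε ^ 2 / (Fintype.card ι * (b - a) ^ 2)) ≤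
      μ.real {ω | |∑ i, (Z i ω - μ[Z i])| < ε} := by
  set S : Ω → ℝ := fun ω ↦ ∑ i, (Z i ω - μ[Z i])
  have h_cover : Set.univ ⊆ {ω | |S ω| < ε} ∪ ({ω | ε ≤ S ω} ∪ {ω | S ω ≤ -ε}) := fun ω _ ↦ by
    rcases lt_or_ge |S ω| ε with h | h
    · exact .inl h
    · exact .inr (le_abs'.mp h).symm
  have h_one := measureReal_mono (μ := μ) h_cover
  rw [probReal_univ] at h_one
  linarith [measureReal_union_le (μ := μ) {ω | |S ω| < ε} ({ω | ε ≤ S ω} ∪ {ω | S ω ≤ -ε}),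
    measureReal_union_le (μ := μ) {ω | ε ≤ S ω} {ω | S ω ≤ -ε},
    measureReal_sum_sub_integral_ge_le_of_mem_Icc h_indep hZ hab hε,
    measureReal_sum_sub_integral_le_neg_le_of_mem_Icc h_indep hZ hab hε]

end Hoeffding

section ChangeOfMeasure

variable {Ω : Type*} [MeasurableSpace Ω] {P Q : Measure Ω} {r : Ω → ℝ}

lemma integrable_of_measureReal_eq_setIntegral [IsProbabilityMeasure P]
    (hPQ : ∀ A, MeasurableSet A → P.real A = ∫ ω in A, r ω ∂Q) : Integrable r Q :=
  Integrable.of_integral_ne_zero (by rw [← setIntegral_univ, ← hPQ _ .univ]; simp)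

lemma eq_withDensity_of_measureReal_eq_setIntegral [IsFiniteMeasure P]
    (hr : ∀ ω, 0 ≤ r ω) (hr_int : Integrable r Q)
    (hPQ : ∀ A, MeasurableSet A → P.real A = ∫ ω in A, r ω ∂Q) :
    P = Q.withDensity fun ω ↦ ENNReal.ofReal (r ω) := by
  ext A hA
  rw [withDensity_apply _ hA, ← ofReal_integral_eq_lintegral_ofReal hr_int.restrict
    (ae_of_all _ hr), ← hPQ A hA, ofReal_measureReal]

lemma integral_eq_integral_mul_of_measureReal_eq_setIntegral [IsFiniteMeasure P]
    (hr_meas : Measurable r) (hr : ∀ ω, 0 ≤ r ω) (hr_int : Integrable r Q)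
    (hPQ : ∀ A, MeasurableSet A → P.real A = ∫ ω in A, r ω ∂Q) (Y : Ω → ℝ) :
    ∫ ω, Y ω ∂P = ∫ ω, Y ω * r ω ∂Q := by
  rw [eq_withDensity_of_measureReal_eq_setIntegral hr hr_int hPQ,
    integral_withDensity_eq_integral_toReal_smul hr_meas.ennreal_ofReal
      (ae_of_all _ fun _ ↦ ENNReal.ofReal_lt_top)]
  simp [ENNReal.toReal_ofReal (hr _), mul_comm]

end ChangeOfMeasure

section ClippedWeight

variable {Ω : Type*} {r Y : Ω → ℝ} {η : ℝ}

noncomputable def clippedWeight (r Y : Ω → ℝ) (η : ℝ) (ω : Ω) : ℝ :=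
  if r ω ≤ η then Y ω * r ω else 0

lemma clippedWeight_nonneg (hr : ∀ ω, 0 ≤ r ω) (hY0 : ∀ ω, 0 ≤ Y ω) (ω : Ω) :
    0 ≤ clippedWeight r Y η ω := by
  unfold clippedWeight
  split_ifs
  exacts [mul_nonneg (hY0 ω) (hr ω), le_rfl]

lemma clippedWeight_le (hr : ∀ ω, 0 ≤ r ω) (hY1 : ∀ ω, Y ω ≤ 1) (hη : 0 ≤ η) (ω : Ω) :
    clippedWeight r Y η ω ≤ η := by
  unfold clippedWeight
  split_ifs with h
  exacts [(mul_le_of_le_one_left (hr ω) (hY1 ω)).trans h, hη]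

lemma clippedWeight_le_mul (hr : ∀ ω, 0 ≤ r ω) (hY0 : ∀ ω, 0 ≤ Y ω) (ω : Ω) :
    clippedWeight r Y η ω ≤ Y ω * r ω := by
  unfold clippedWeight
  split_ifs
  exacts [le_rfl, mul_nonneg (hY0 ω) (hr ω)]

lemma mul_sub_clippedWeight_le_indicator (hr : ∀ ω, 0 ≤ r ω) (hY1 : ∀ ω, Y ω ≤ 1) (ω : Ω) :
    Y ω * r ω - clippedWeight r Y η ω ≤ {ω | η < r ω}.indicator r ω := by
  unfold clippedWeight
  by_cases h : r ω ≤ η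
  · simp [h]
  · rw [if_neg h, sub_zero, Set.indicator_of_mem (show ω ∈ {ω | η < r ω} from not_le.mp h)]
    exact mul_le_of_le_one_left (hr ω) (hY1 ω)

variable [MeasurableSpace Ω] {P Q : Measure Ω}

lemma measurable_clippedWeight (hr_meas : Measurable r) (hY_meas : Measurable Y) :
    Measurable (clippedWeight r Y η) :=
  Measurable.ite (measurableSet_le hr_meas measurable_const) (hY_meas.mul hr_meas)
    measurable_const

lemma integrable_mul_of_le_one (hr_meas : Measurable r) (hY_meas : Measurable Y)
    (hr : ∀ ω, 0 ≤ r ω) (hY0 : ∀ ω, 0 ≤ Y ω) (hY1 : ∀ ω, Y ω ≤ 1) (hr_int : Integrable r Q) :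
    Integrable (fun ω ↦ Y ω * r ω) Q :=
  hr_int.mono' (hY_meas.mul hr_meas).aestronglyMeasurable (ae_of_all _ fun ω ↦ by
    rw [norm_of_nonneg (mul_nonneg (hY0 ω) (hr ω))]; exact mul_le_of_le_one_left (hr ω) (hY1 ω))

lemma integrable_clippedWeight (hr_meas : Measurable r) (hY_meas : Measurable Y)
    (hr : ∀ ω, 0 ≤ r ω) (hY0 : ∀ ω, 0 ≤ Y ω) (hY1 : ∀ ω, Y ω ≤ 1) (hr_int : Integrable r Q) :
    Integrable (clippedWeight r Y η) Q :=
  (integrable_mul_of_le_one hr_meas hY_meas hr hY0 hY1 hr_int).mono'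
    (measurable_clippedWeight hr_meas hY_meas).aestronglyMeasurable (ae_of_all _ fun ω ↦ by
      rw [norm_of_nonneg (clippedWeight_nonneg hr hY0 ω)]
      exact clippedWeight_le_mul hr hY0 ω)

lemma integral_clippedWeight_le [IsFiniteMeasure P] [IsFiniteMeasure Q] (hr_meas : Measurable r)
    (hY_meas : Measurable Y) (hr : ∀ ω, 0 ≤ r ω) (hY0 : ∀ ω, 0 ≤ Y ω) (hY1 : ∀ ω, Y ω ≤ 1)
    (hr_int : Integrable r Q) (hPQ : ∀ A, MeasurableSet A → P.real A = ∫ ω in A, r ω ∂Q) :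
    ∫ ω, clippedWeight r Y η ω ∂Q ≤ ∫ ω, Y ω ∂P := by
  rw [integral_eq_integral_mul_of_measureReal_eq_setIntegral hr_meas hr hr_int hPQ]
  exact integral_mono (integrable_clippedWeight hr_meas hY_meas hr hY0 hY1 hr_int)
    (integrable_mul_of_le_one hr_meas hY_meas hr hY0 hY1 hr_int) (clippedWeight_le_mul hr hY0)

lemma integral_sub_measureReal_le_integral_clippedWeight [IsFiniteMeasure P] [IsFiniteMeasure Q]
    (hr_meas : Measurable r) (hY_meas : Measurable Y) (hr : ∀ ω, 0 ≤ r ω)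
    (hY0 : ∀ ω, 0 ≤ Y ω) (hY1 : ∀ ω, Y ω ≤ 1) (hr_int : Integrable r Q)
    (hPQ : ∀ A, MeasurableSet A → P.real A = ∫ ω in A, r ω ∂Q) :
    ∫ ω, Y ω ∂P - P.real {ω | η < r ω} ≤ ∫ ω, clippedWeight r Y η ω ∂Q := by
  have hA : MeasurableSet {ω | η < r ω} := measurableSet_lt measurable_const hr_meas
  have hYr := integrable_mul_of_le_one hr_meas hY_meas hr hY0 hY1 hr_int
  have hW := integrable_clippedWeight (η := η) hr_meas hY_meas hr hY0 hY1 hr_int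
  have h_tail : P.real {ω | η < r ω} = ∫ ω, {ω | η < r ω}.indicator r ω ∂Q := by
    rw [integral_indicator hA, hPQ _ hA]
  have h_clip := integral_mono (hYr.sub hW) (hr_int.indicator hA)
    (mul_sub_clippedWeight_le_indicator (η := η) hr hY1)
  rw [integral_sub' hYr hW] at h_clip
  rw [integral_eq_integral_mul_of_measureReal_eq_setIntegral hr_meas hr hr_int hPQ, h_tail]
  linarith

end ClippedWeight

lemma one_div_mul_sum_mem_Icc_of_abs_sum_sub_lt {n : ℕ} (hn : 0 < n) {z : Fin n → ℝ}
    {m δ : ℝ} (h : |∑ i, (z i - m)| < n * δ) :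
    (1 / n) * ∑ i, z i ∈ Set.Icc (m - δ) (m + δ) := by
  have hn' : (0 : ℝ) < n := Nat.cast_pos.mpr hn
  rw [Finset.sum_sub_distrib, Finset.sum_const, Finset.card_univ, Fintype.card_fin,
    nsmul_eq_mul, abs_lt] at h
  constructor
  · rw [one_div_mul_eq_div, le_div_iff₀ hn']
    linarith
  · rw [one_div_mul_eq_div, div_le_iff₀ hn']
    linarith

theorem stmt2_general {Ω : Type*} [mΩ : MeasurableSpace Ω]
    (P Q : Measure Ω) [IsProbabilityMeasure P] [IsProbabilityMeasure Q]
    (r : Ω → ℝ) (hr_meas : Measurable r) (hr_nonneg : ∀ ω, 0 ≤ r ω)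
    (hPQ : ∀ A : Set Ω, MeasurableSet A → (P A).toReal = ∫ ω in A, r ω ∂Q)
    (Y : Ω → ℝ) (hY_meas : Measurable Y)
    (hY0 : ∀ ω, 0 ≤ Y ω) (hY1 : ∀ ω, Y ω ≤ 1)
    (η ε : ℝ) (hη : 0 < η)
    (htail : (P {ω | η < r ω}).toReal ≤ ε / 2)
    {Ω' : Type*} [MeasurableSpace Ω'] (Pr : Measure Ω') [IsProbabilityMeasure Pr]
    (t : ℕ) (ht : 1 ≤ t) (X : Fin t → Ω' → Ω)
    (hX_meas : ∀ s, Measurable (X s))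
    (hX_indep : iIndepFun X Pr)
    (hX_dist : ∀ s, Measure.map (X s) Pr = Q)
    (δ : ℝ) (hδ : 0 < δ) :
    1 - 2 * Real.exp (-(δ ^ 2 * t) / (2 * η ^ 2)) ≤
      (Pr {ω' | (∫ ω, Y ω ∂P) - δ - ε / 2 ≤
          (1 / t) * ∑ s, (if r (X s ω') ≤ η then Y (X s ω') * r (X s ω') else 0) ∧
          (1 / t) * ∑ s, (if r (X s ω') ≤ η then Y (X s ω') * r (X s ω') else 0) ≤
          (∫ ω, Y ω ∂P) + δ}).toReal := by
  have hr_int := integrable_of_measureReal_eq_setIntegral hPQ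
  have hW_meas := measurable_clippedWeight (η := η) hr_meas hY_meas
  have hW_mean : ∀ s, ∫ ω', clippedWeight r Y η (X s ω') ∂Pr = ∫ ω, clippedWeight r Y η ω ∂Q :=
    fun s ↦ by
      rw [← hX_dist s, integral_map (hX_meas s).aemeasurable hW_meas.aestronglyMeasurable]
  set m := ∫ ω, clippedWeight r Y η ω ∂Q
  have hm_le : m ≤ ∫ ω, Y ω ∂P :=
    integral_clippedWeight_le hr_meas hY_meas hr_nonneg hY0 hY1 hr_int hPQ
  have hm_ge : ∫ ω, Y ω ∂P - ε / 2 ≤ m := by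
    have := integral_sub_measureReal_le_integral_clippedWeight (η := η) hr_meas hY_meas
      hr_nonneg hY0 hY1 hr_int hPQ
    rw [measureReal_def] at this
    linarith
  have h_hoeffding := measureReal_abs_sum_sub_integral_lt_ge_of_mem_Icc
    (Z := fun s ω' ↦ clippedWeight r Y η (X s ω')) (a := 0) (b := η)
    (hX_indep.comp _ fun _ ↦ hW_meas) (fun s ↦ hW_meas.comp (hX_meas s))
    (fun _ _ ↦ ⟨clippedWeight_nonneg hr_nonneg hY0 _, clippedWeight_le hr_nonneg hY1 hη.le _⟩)
    (ε := t * δ) (by positivity)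
  simp only [hW_mean, Fintype.card_fin, sub_zero] at h_hoeffding
  have h_exp : -2 * (t * δ) ^ 2 / (t * η ^ 2) ≤ -(δ ^ 2 * t) / (2 * η ^ 2) := by
    have ht' : (0 : ℝ) < t := by exact_mod_cast ht
    rw [div_le_div_iff₀ (by positivity) (by positivity)]
    nlinarith [show 0 < (t : ℝ) ^ 2 * δ ^ 2 * η ^ 2 by positivity]
  calc 1 - 2 * exp (-(δ ^ 2 * t) / (2 * η ^ 2))
      ≤ 1 - 2 * exp (-2 * (t * δ) ^ 2 / (t * η ^ 2)) := by gcongr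
    _ ≤ _ := h_hoeffding
    _ ≤ _ := measureReal_mono fun ω' hω' ↦ by
      obtain ⟨h_lower, h_upper⟩ := one_div_mul_sum_mem_Icc_of_abs_sum_sub_lt ht hω'
      unfold clippedWeight at h_lower h_upper
      exact ⟨by linarith, by linarith⟩

/-- Concentration of the clipped importance-sampling estimator: if `P(r > η) ≤ ε/2`
and `X_1, …, X_t` are i.i.d. with law `Q`, then with probability at least
`1 − 2·exp(−δ²t/(2η²))` the clipped empirical mean `(1/t)·Σ_s Y(X_s)·r(X_s)·1{r(X_s) ≤ η}`
lies in `[μ − δ − ε/2, μ + δ]`, where `μ = ∫ Y dP`. -/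
theorem stmt2 {Ω : Type*} [mΩ : MeasurableSpace Ω]
    (P Q : Measure Ω) [IsProbabilityMeasure P] [IsProbabilityMeasure Q]
    (r : Ω → ℝ) (hr_meas : Measurable r) (hr_nonneg : ∀ ω, 0 ≤ r ω)
    (hPQ : ∀ A : Set Ω, MeasurableSet A → (P A).toReal = ∫ ω in A, r ω ∂Q)
    (Y : Ω → ℝ) (hY_meas : Measurable Y)
    (hY0 : ∀ ω, 0 ≤ Y ω) (hY1 : ∀ ω, Y ω ≤ 1)
    (η ε : ℝ) (hη : 0 < η) (hε : 0 < ε)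
    (htail : (P {ω | η < r ω}).toReal ≤ ε / 2)
    {Ω' : Type*} [MeasurableSpace Ω'] (Pr : Measure Ω') [IsProbabilityMeasure Pr]
    (t : ℕ) (ht : 1 ≤ t) (X : Fin t → Ω' → Ω)
    (hX_meas : ∀ s, Measurable (X s))
    (hX_indep : iIndepFun X Pr)
    (hX_dist : ∀ s, Measure.map (X s) Pr = Q)
    (δ : ℝ) (hδ : 0 < δ) :
    1 - 2 * Real.exp (-(δ ^ 2 * t) / (2 * η ^ 2)) ≤
      (Pr {ω' | (∫ ω, Y ω ∂P) - δ - ε / 2 ≤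
          (1 / t) * ∑ s, (if r (X s ω') ≤ η then Y (X s ω') * r (X s ω') else 0) ∧
          (1 / t) * ∑ s, (if r (X s ω') ≤ η then Y (X s ω') * r (X s ω') else 0) ≤
          (∫ ω, Y ω ∂P) + δ}).toReal :=
  stmt2_general (mΩ := mΩ) P Q r hr_meas hr_nonneg hPQ Y hY_meas hY0 hY1 η ε hη htail Pr t ht X
    hX_meas hX_indep hX_dist δ hδ
end

section
/- (Quantile bound via the f₁-divergence, first form.) Let 0 < ε ≤ 2. If η ≥ log(2/ε) + 1 + log(1 + D), then P({ω : r(ω) > η}) ≤ ε/2. -/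
/-!
On `{r > η}` we have `r ≤ r · exp (r - η) = exp (1 - η) · r · exp (r - 1)`, so
`P {r > η} = ∫_{r > η} r dQ ≤ exp (1 - η) · ∫ r · exp (r - 1) dQ = exp (1 - η) · (1 + D)`,
and the assumption on `η` makes the right-hand side at most `ε / 2`.
-/

open MeasureTheory Real

lemma le_exp_mul_mul_exp_of_lt {x η : ℝ} (hx : 0 ≤ x) (hηx : η < x) :
    x ≤ exp (1 - η) * (x * exp (x - 1)) := by
  have h : exp (1 - η) * exp (x - 1) = exp (x - η) := by rw [← exp_add]; ring_nf
  calc x ≤ x * exp (x - η) := le_mul_of_one_le_right hx (one_le_exp (by linarith))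
    _ = exp (1 - η) * (x * exp (x - 1)) := by rw [← h]; ring

lemma setIntegral_lt_le_exp_mul_integral_mul_exp {Ω : Type*} [MeasurableSpace Ω]
    {μ : Measure Ω} {r : Ω → ℝ} (hr_meas : Measurable r) (hr_nonneg : ∀ ω, 0 ≤ r ω)
    (hint : Integrable (fun ω => r ω * exp (r ω - 1)) μ) (η : ℝ) :
    ∫ ω in {ω | η < r ω}, r ω ∂μ ≤ exp (1 - η) * ∫ ω, r ω * exp (r ω - 1) ∂μ := by
  have hS : MeasurableSet {ω | η < r ω} := measurableSet_lt measurable_const hr_meas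
  have hbound_nonneg : ∀ ω, 0 ≤ exp (1 - η) * (r ω * exp (r ω - 1)) := fun ω =>
    mul_nonneg (exp_pos _).le (mul_nonneg (hr_nonneg ω) (exp_pos _).le)
  calc ∫ ω in {ω | η < r ω}, r ω ∂μ
      ≤ ∫ ω in {ω | η < r ω}, exp (1 - η) * (r ω * exp (r ω - 1)) ∂μ :=
        integral_mono_of_nonneg (.of_forall hr_nonneg) (hint.const_mul _).integrableOn
          (ae_restrict_of_forall_mem hS fun ω hω => le_exp_mul_mul_exp_of_lt (hr_nonneg ω) hω)
    _ ≤ ∫ ω, exp (1 - η) * (r ω * exp (r ω - 1)) ∂μ :=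
        setIntegral_le_integral (hint.const_mul _) (.of_forall hbound_nonneg)
    _ = exp (1 - η) * ∫ ω, r ω * exp (r ω - 1) ∂μ := integral_const_mul _ _

lemma mul_exp_neg_le_inv_of_log_add_log_le {a c t : ℝ} (ha : 0 < a) (hc : 0 ≤ c)
    (h : log a + log c ≤ t) : c * exp (-t) ≤ a⁻¹ := by
  rcases hc.eq_or_lt with rfl | hc
  · simpa using ha.le
  have hac : a * c ≤ exp t := by
    rw [← exp_log ha, ← exp_log hc, ← exp_add]
    exact exp_le_exp.2 h
  rw [exp_neg, ← div_eq_mul_inv, div_le_iff₀ (exp_pos t)]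
  calc c = a⁻¹ * (a * c) := by field_simp
    _ ≤ a⁻¹ * exp t := by gcongr

theorem stmt4_general {Ω : Type*} [MeasurableSpace Ω]
    (P Q : Measure Ω) [IsProbabilityMeasure P] [IsProbabilityMeasure Q]
    (r : Ω → ℝ) (hr_meas : Measurable r) (hr_nonneg : ∀ ω, 0 ≤ r ω)
    (hPQ : ∀ A : Set Ω, MeasurableSet A → (P A).toReal = ∫ ω in A, r ω ∂Q)
    (hint : Integrable (fun ω => r ω * Real.exp (r ω)) Q)
    (D : ℝ) (hD : D = ∫ ω, (r ω * Real.exp (r ω - 1) - 1) ∂Q)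
    (ε η : ℝ) (hε0 : 0 < ε)
    (hη : Real.log (2 / ε) + 1 + Real.log (1 + D) ≤ η) :
    (P {ω | η < r ω}).toReal ≤ ε / 2 := by
  have hint' : Integrable (fun ω => r ω * exp (r ω - 1)) Q := by
    simpa only [exp_sub, mul_div_assoc] using hint.div_const (exp 1)
  have hD' : 1 + D = ∫ ω, r ω * exp (r ω - 1) ∂Q := by
    rw [hD, integral_sub hint' (integrable_const 1)]
    simp
  have hD_nonneg : 0 ≤ 1 + D := hD' ▸ integral_nonneg fun ω =>
    mul_nonneg (hr_nonneg ω) (exp_pos _).le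
  calc (P {ω | η < r ω}).toReal = ∫ ω in {ω | η < r ω}, r ω ∂Q :=
        hPQ _ (measurableSet_lt measurable_const hr_meas)
    _ ≤ exp (1 - η) * ∫ ω, r ω * exp (r ω - 1) ∂Q :=
        setIntegral_lt_le_exp_mul_integral_mul_exp hr_meas hr_nonneg hint' η
    _ = (1 + D) * exp (-(η - 1)) := by rw [hD']; ring_nf
    _ ≤ (2 / ε)⁻¹ :=
        mul_exp_neg_le_inv_of_log_add_log_le (by positivity) hD_nonneg (by linarith)
    _ = ε / 2 := inv_div _ _

/-- Quantile bound via the `f₁`-divergence, first form: for `0 < ε ≤ 2`, if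
`η ≥ log(2/ε) + 1 + log(1 + D)` where `D = ∫ f₁(r) dQ` with `f₁(x) = x·exp(x−1) − 1`,
then `P({ω : r ω > η}) ≤ ε/2`. -/
theorem stmt4 {Ω : Type*} [MeasurableSpace Ω]
    (P Q : Measure Ω) [IsProbabilityMeasure P] [IsProbabilityMeasure Q]
    (r : Ω → ℝ) (hr_meas : Measurable r) (hr_nonneg : ∀ ω, 0 ≤ r ω)
    (hPQ : ∀ A : Set Ω, MeasurableSet A → (P A).toReal = ∫ ω in A, r ω ∂Q)
    (hint : Integrable (fun ω => r ω * Real.exp (r ω)) Q)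
    (D : ℝ) (hD : D = ∫ ω, (r ω * Real.exp (r ω - 1) - 1) ∂Q)
    (ε η : ℝ) (hε0 : 0 < ε) (hε2 : ε ≤ 2)
    (hη : Real.log (2 / ε) + 1 + Real.log (1 + D) ≤ η) :
    (P {ω | η < r ω}).toReal ≤ ε / 2 :=
  stmt4_general P Q r hr_meas hr_nonneg hPQ hint D hD ε η hε0 hη
end

section
/- (Quantile bound via the f₁-divergence, product form.) Let 0 < ε ≤ 2/e (so that log(2/ε) ≥ 1). Then P({ω : r(ω) > 2·log(2/ε)·M}) ≤ ε/2, where M = 1 + log(1 + D). -/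
/-!
On `{r > t}` we have `r ≤ r·e^{r-1}·e^{1-t}`, so `P(r > t) = ∫_{r>t} r dQ ≤ e^{1-t}(1 + D)`.
With `t = 2LM`, `L = log(2/ε) ≥ 1` and `D ≥ 0` (integrate `x·e^{x-1} ≥ 2x - 1` against `Q`, using `∫ r dQ = 1`),
the exponent satisfies `log(1 + D) + 1 - 2L(1 + log(1 + D)) ≤ -L`, and `e^{-L} = ε/2`.
-/

open MeasureTheory Real

lemma Real.two_mul_sub_one_le_mul_exp_sub_one (x : ℝ) : 2 * x - 1 ≤ x * exp (x - 1) := by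
  have hx : x ≤ exp (x - 1) := by linarith [add_one_le_exp (x - 1)]
  rcases le_total 0 x with hx0 | hx0
  · nlinarith [mul_le_mul_of_nonneg_left hx hx0, sq_nonneg (x - 1)]
  · have hexp : exp (x - 1) ≤ 1 := exp_le_one_iff.mpr (by linarith)
    nlinarith [mul_le_mul_of_nonpos_left hexp hx0]

lemma Real.one_le_log_two_div {ε : ℝ} (hε0 : 0 < ε) (hε : ε ≤ 2 / exp 1) : 1 ≤ log (2 / ε) := by
  rw [le_log_iff_exp_le (by positivity), le_div_iff₀ hε0]
  rwa [le_div_iff₀ (exp_pos 1), mul_comm] at hε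

lemma Real.mul_exp_one_sub_le_exp_neg {L a : ℝ} (hL : 1 ≤ L) (ha : 1 ≤ a) :
    a * exp (1 - 2 * L * (1 + log a)) ≤ exp (-L) := by
  have hlog : 0 ≤ log a := log_nonneg ha
  rw [← exp_log (by linarith : 0 < a), ← exp_add, exp_le_exp, log_exp]
  nlinarith [mul_le_mul_of_nonneg_right hL hlog]

namespace MeasureTheory

variable {Ω : Type*} [MeasurableSpace Ω] {μ : Measure Ω} {r : Ω → ℝ}

lemma one_le_integral_mul_exp_sub_one [IsProbabilityMeasure μ] (hr : Integrable r μ)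
    (hr_one : ∫ ω, r ω ∂μ = 1) (hg : Integrable (fun ω => r ω * exp (r ω - 1)) μ) :
    1 ≤ ∫ ω, r ω * exp (r ω - 1) ∂μ :=
  calc (1 : ℝ) = ∫ ω, (2 * r ω - 1) ∂μ := by
        rw [integral_sub (hr.const_mul 2) (integrable_const 1), integral_const_mul, hr_one]
        norm_num
    _ ≤ ∫ ω, r ω * exp (r ω - 1) ∂μ :=
        integral_mono ((hr.const_mul 2).sub (integrable_const 1)) hg
          fun ω => two_mul_sub_one_le_mul_exp_sub_one (r ω)

lemma setIntegral_lt_le_exp_one_sub_mul_integral (hr : Measurable r) (hr0 : ∀ ω, 0 ≤ r ω)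
    (hg : Integrable (fun ω => r ω * exp (r ω - 1)) μ) (t : ℝ) :
    ∫ ω in {ω | t < r ω}, r ω ∂μ ≤ exp (1 - t) * ∫ ω, r ω * exp (r ω - 1) ∂μ := by
  have hA : MeasurableSet {ω | t < r ω} := measurableSet_lt measurable_const hr
  have hg0 : 0 ≤ᵐ[μ] fun ω => exp (1 - t) * (r ω * exp (r ω - 1)) :=
    ae_of_all _ fun ω => by have := hr0 ω; positivity
  rw [← integral_const_mul]
  calc ∫ ω in {ω | t < r ω}, r ω ∂μ
      ≤ ∫ ω in {ω | t < r ω}, exp (1 - t) * (r ω * exp (r ω - 1)) ∂μ := by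
        refine integral_mono_of_nonneg (ae_of_all _ hr0) (hg.const_mul _).integrableOn
          (ae_restrict_of_forall_mem hA fun ω (hω : t < r ω) => ?_)
        have : 1 ≤ exp (r ω - t) := one_le_exp (by linarith)
        calc r ω ≤ r ω * exp (r ω - t) := le_mul_of_one_le_right (hr0 ω) this
          _ = exp (1 - t) * (r ω * exp (r ω - 1)) := by
            rw [mul_left_comm, ← exp_add]; ring_nf
    _ ≤ ∫ ω, exp (1 - t) * (r ω * exp (r ω - 1)) ∂μ :=
        setIntegral_le_integral (hg.const_mul _) hg0

end MeasureTheory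

open MeasureTheory

/-- Quantile bound via the `f₁`-divergence, product form: for `0 < ε ≤ 2/e`,
`P({ω : r ω > 2·log(2/ε)·M}) ≤ ε/2`, where `M = 1 + log(1 + D)` and
`D = ∫ f₁(r) dQ` with `f₁(x) = x·exp(x−1) − 1`. -/
theorem stmt5 {Ω : Type*} [MeasurableSpace Ω]
    (P Q : Measure Ω) [IsProbabilityMeasure P] [IsProbabilityMeasure Q]
    (r : Ω → ℝ) (hr_meas : Measurable r) (hr_nonneg : ∀ ω, 0 ≤ r ω)
    (hPQ : ∀ A : Set Ω, MeasurableSet A → (P A).toReal = ∫ ω in A, r ω ∂Q)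
    (hint : Integrable (fun ω => r ω * Real.exp (r ω)) Q)
    (D : ℝ) (hD : D = ∫ ω, (r ω * Real.exp (r ω - 1) - 1) ∂Q)
    (M : ℝ) (hM : M = 1 + Real.log (1 + D))
    (ε : ℝ) (hε0 : 0 < ε) (hε1 : ε ≤ 2 / Real.exp 1) :
    (P {ω | 2 * Real.log (2 / ε) * M < r ω}).toReal ≤ ε / 2 := by
  have hg : Integrable (fun ω => r ω * exp (r ω - 1)) Q := by
    simpa only [exp_sub, mul_div_assoc] using hint.div_const (exp 1)
  have hr : Integrable r Q :=
    hint.mono' hr_meas.aestronglyMeasurable <| ae_of_all _ fun ω => by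
      rw [norm_of_nonneg (hr_nonneg ω)]
      exact le_mul_of_one_le_right (hr_nonneg ω) (one_le_exp (hr_nonneg ω))
  have hr_one : ∫ ω, r ω ∂Q = 1 := by
    simpa using (hPQ Set.univ MeasurableSet.univ).symm
  have hD_eq : 1 + D = ∫ ω, r ω * exp (r ω - 1) ∂Q := by
    rw [hD, integral_sub hg (integrable_const 1)]; simp
  have hA := hPQ _ (measurableSet_lt measurable_const hr_meas :
    MeasurableSet {ω | 2 * log (2 / ε) * M < r ω})
  calc (P {ω | 2 * log (2 / ε) * M < r ω}).toReal
      ≤ exp (1 - 2 * log (2 / ε) * M) * (1 + D) := by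
        rw [hA, hD_eq]; exact setIntegral_lt_le_exp_one_sub_mul_integral hr_meas hr_nonneg hg _
    _ ≤ exp (-log (2 / ε)) := by
        rw [mul_comm, hM]
        exact mul_exp_one_sub_le_exp_neg (one_le_log_two_div hε0 hε1)
          (hD_eq ▸ one_le_integral_mul_exp_sub_one hr hr_one hg)
    _ = ε / 2 := by rw [exp_neg, exp_log (by positivity), inv_div]
end

section
/- (Bias of the aggregated multi-arm clipped estimator.) The expectation of Ŷ satisfies E[Ŷ] ≤ μ ≤ E[Ŷ] + ε/2, where μ = ∫ Y dP. -/
open MeasureTheory ProbabilityTheory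

/-- Bias of the aggregated multi-arm clipped importance-sampling estimator:
`E[Ŷ] ≤ μ ≤ E[Ŷ] + ε/2`, where `μ = ∫ Y dP`, `Ŷ` is the weighted average of the
clipped importance-weighted samples (samples from arm `j` weighted by `1/M_j` and
clipped at `2·log(2/ε)·M_j`), and `M_j = 1 + log(1 + D_j)` with
`D_j = ∫ f₁(r_j) dQ_j`, `f₁(x) = x·exp(x−1) − 1`. -/
theorem stmt7 {Ω : Type*} [mΩ : MeasurableSpace Ω]
    (K : ℕ) (hK : 1 ≤ K)
    (P : Measure Ω) [IsProbabilityMeasure P]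
    (Q : Fin K → Measure Ω) [∀ j, IsProbabilityMeasure (Q j)]
    (r : Fin K → Ω → ℝ)
    (hr_meas : ∀ j, Measurable (r j)) (hr_nonneg : ∀ j ω, 0 ≤ r j ω)
    (hPQ : ∀ j, ∀ A : Set Ω, MeasurableSet A → (P A).toReal = ∫ ω in A, r j ω ∂(Q j))
    (hD_int : ∀ j, Integrable (fun ω => r j ω * Real.exp (r j ω)) (Q j))
    (M : Fin K → ℝ)
    (hM : ∀ j, M j = 1 + Real.log (1 + ∫ ω, (r j ω * Real.exp (r j ω - 1) - 1) ∂(Q j)))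
    (Y : Ω → ℝ) (hY_meas : Measurable Y)
    (hY0 : ∀ ω, 0 ≤ Y ω) (hY1 : ∀ ω, Y ω ≤ 1)
    (τ : Fin K → ℕ) (hτ : 1 ≤ ∑ j, τ j)
    (Z : ℝ) (hZ : Z = ∑ j, (τ j : ℝ) / M j)
    (ε : ℝ) (hε0 : 0 < ε) (hε1 : ε ≤ 2 / Real.exp 1)
    {Ω' : Type*} [MeasurableSpace Ω'] (Pr : Measure Ω') [IsProbabilityMeasure Pr]
    (X : (j : Fin K) → Fin (τ j) → Ω' → Ω)
    (hX_meas : ∀ j s, Measurable (X j s))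
    (hX_indep : iIndepFun (β := fun _ : (j : Fin K) × Fin (τ j) => Ω)
      (fun p => X p.1 p.2) Pr)
    (hX_dist : ∀ j s, Measure.map (X j s) Pr = Q j)
    (Yhat : Ω' → ℝ)
    (hYhat : ∀ ω', Yhat ω' = (1 / Z) * ∑ j, ∑ s,
      (1 / M j) * (if r j (X j s ω') ≤ 2 * Real.log (2 / ε) * M j
        then Y (X j s ω') * r j (X j s ω') else 0)) :
    (∫ ω', Yhat ω' ∂Pr) ≤ ∫ ω, Y ω ∂P ∧
    ∫ ω, Y ω ∂P ≤ (∫ ω', Yhat ω' ∂Pr) + ε / 2 := by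
  classical
  set C : ℝ := 2 * Real.log (2 / ε) with hC_def
  have hexp1 : Real.exp 1 ≤ 2 / ε := by
    rw [le_div_iff₀ hε0]
    have h2 : Real.exp 1 * ε ≤ Real.exp 1 * (2 / Real.exp 1) :=
      mul_le_mul_of_nonneg_left hε1 (Real.exp_pos 1).le
    calc Real.exp 1 * ε ≤ Real.exp 1 * (2 / Real.exp 1) := h2
      _ = 2 := by field_simp
  have hC2 : (2:ℝ) ≤ C := by
    have h1 : (1:ℝ) ≤ Real.log (2 / ε) := by
      have := Real.log_le_log (Real.exp_pos 1) hexp1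
      rwa [Real.log_exp] at this
    rw [hC_def]; linarith
  set D : Fin K → ℝ := fun j => ∫ ω, (r j ω * Real.exp (r j ω - 1) - 1) ∂(Q j) with hD_def
  have hMD : ∀ j, M j = 1 + Real.log (1 + D j) := fun j => hM j
  have hre1_int : ∀ j, Integrable (fun ω => r j ω * Real.exp (r j ω - 1)) (Q j) := by
    intro j
    refine ((hD_int j).div_const (Real.exp 1)).congr ?_
    filter_upwards with ω
    rw [Real.exp_sub]; ring
  have hr_int : ∀ j, Integrable (r j) (Q j) := by
    intro j
    refine (hD_int j).mono' (hr_meas j).aestronglyMeasurable ?_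
    filter_upwards with ω
    have h0 := hr_nonneg j ω
    have h1 : (1:ℝ) ≤ Real.exp (r j ω) := by
      have := Real.add_one_le_exp (r j ω); linarith
    rw [Real.norm_eq_abs, abs_of_nonneg h0]
    nlinarith
  have hQr : ∀ j, ∫ ω, r j ω ∂(Q j) = 1 := by
    intro j
    have := hPQ j Set.univ MeasurableSet.univ
    simpa [measure_univ] using this.symm
  have hD0 : ∀ j, 0 ≤ D j := by
    intro j
    have hmono : ∫ ω, (2 * r j ω - 2) ∂(Q j) ≤ D j := by
      refine integral_mono (((hr_int j).const_mul 2).sub (integrable_const 2))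
        ((hre1_int j).sub (integrable_const 1)) ?_
      intro ω
      have h0 := hr_nonneg j ω
      have h1 : r j ω ≤ Real.exp (r j ω - 1) := by
        have := Real.add_one_le_exp (r j ω - 1); linarith
      have h2 : r j ω * r j ω ≤ r j ω * Real.exp (r j ω - 1) :=
        mul_le_mul_of_nonneg_left h1 h0
      simp only
      nlinarith [sq_nonneg (r j ω - 1)]
    have hval : ∫ ω, (2 * r j ω - 2) ∂(Q j) = 0 := by
      rw [integral_sub ((hr_int j).const_mul 2) (integrable_const 2),
        integral_const_mul, hQr j]
      simp
    linarith
  have hM1 : ∀ j, 1 ≤ M j := by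
    intro j
    rw [hMD j]
    have := Real.log_nonneg (by linarith [hD0 j] : (1:ℝ) ≤ 1 + D j)
    linarith
  have hMpos : ∀ j, 0 < M j := fun j => lt_of_lt_of_le one_pos (hM1 j)
  have hP_eq : ∀ j, P = (Q j).withDensity (fun ω => ((r j ω).toNNReal : ENNReal)) := by
    intro j
    ext A hA
    have h1 : ((Q j).withDensity fun ω => ((r j ω).toNNReal : ENNReal)) A
        = ENNReal.ofReal (∫ ω in A, r j ω ∂(Q j)) := by
      rw [withDensity_apply _ hA,
        ofReal_integral_eq_lintegral_ofReal ((hr_int j).restrict)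
          (Filter.Eventually.of_forall (hr_nonneg j))]
      rfl
    rw [h1, ← hPQ j A hA, ENNReal.ofReal_toReal (measure_ne_top P A)]
  have hμ_eq : ∀ j, ∫ ω, Y ω ∂P = ∫ ω, r j ω * Y ω ∂(Q j) := by
    intro j
    rw [hP_eq j,
      integral_withDensity_eq_integral_smul (f := fun ω => (r j ω).toNNReal)
        (by exact measurable_real_toNNReal.comp (hr_meas j)) Y]
    refine integral_congr_ae (Filter.Eventually.of_forall fun ω => ?_)
    simp [NNReal.smul_def, Real.coe_toNNReal _ (hr_nonneg j ω)]
  set g : Fin K → Ω → ℝ :=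
    fun j ω => if r j ω ≤ C * M j then Y ω * r j ω else 0 with hg_def
  have hg_meas : ∀ j, Measurable (g j) := by
    intro j
    exact Measurable.ite (measurableSet_le (hr_meas j) measurable_const)
      (hY_meas.mul (hr_meas j)) measurable_const
  have hg_nonneg : ∀ j ω, 0 ≤ g j ω := by
    intro j ω
    by_cases h : r j ω ≤ C * M j <;>
      simp [hg_def, h, mul_nonneg (hY0 ω) (hr_nonneg j ω)]
  have hg_le : ∀ j ω, g j ω ≤ r j ω * Y ω := by
    intro j ω
    by_cases h : r j ω ≤ C * M j
    · have hgv : g j ω = Y ω * r j ω := by simp [hg_def, h]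
      rw [hgv, mul_comm]
    · have hgv : g j ω = 0 := by simp [hg_def, h]
      rw [hgv]
      exact mul_nonneg (hr_nonneg j ω) (hY0 ω)
  have hrY_int : ∀ j, Integrable (fun ω => r j ω * Y ω) (Q j) := by
    intro j
    refine (hr_int j).mono' ((hr_meas j).mul hY_meas).aestronglyMeasurable ?_
    filter_upwards with ω
    rw [Real.norm_eq_abs, abs_of_nonneg (mul_nonneg (hr_nonneg j ω) (hY0 ω))]
    nlinarith [hr_nonneg j ω, hY0 ω, hY1 ω]
  have hg_int : ∀ j, Integrable (g j) (Q j) := by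
    intro j
    refine (hrY_int j).mono' (hg_meas j).aestronglyMeasurable ?_
    filter_upwards with ω
    rw [Real.norm_eq_abs, abs_of_nonneg (hg_nonneg j ω)]
    exact hg_le j ω
  set I : Fin K → ℝ := fun j => ∫ ω, g j ω ∂(Q j) with hI_def
  set μ : ℝ := ∫ ω, Y ω ∂P with hμ_def
  have hI_le_μ : ∀ j, I j ≤ μ := by
    intro j
    have : μ = ∫ ω, r j ω * Y ω ∂(Q j) := hμ_eq j
    rw [this]
    exact integral_mono (hg_int j) (hrY_int j) (hg_le j)
  have hμ_le : ∀ j, μ ≤ I j + ε / 2 := by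
    intro j
    have ht2 : (2:ℝ) ≤ C * M j := by
      calc (2:ℝ) = 2 * 1 := by ring
        _ ≤ C * M j := mul_le_mul hC2 (hM1 j) one_pos.le (by linarith)
    have hret_int : Integrable (fun ω => r j ω * Real.exp (r j ω - C * M j)) (Q j) := by
      refine ((hD_int j).mul_const (Real.exp (-(C * M j)))).congr ?_
      filter_upwards with ω
      rw [Real.exp_sub, Real.exp_neg]; ring
    have hstep1 : μ - I j ≤ ∫ ω, r j ω * Real.exp (r j ω - C * M j) ∂(Q j) := by
      have hsub : μ - I j = ∫ ω, (r j ω * Y ω - g j ω) ∂(Q j) := by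
        rw [hμ_eq j, integral_sub (hrY_int j) (hg_int j)]
      rw [hsub]
      refine integral_mono ((hrY_int j).sub (hg_int j)) hret_int ?_
      intro ω
      have h0 := hr_nonneg j ω
      have hepos : (0:ℝ) < Real.exp (r j ω - C * M j) := Real.exp_pos _
      simp only
      by_cases h : r j ω ≤ C * M j
      · have : g j ω = Y ω * r j ω := by simp [hg_def, h]
        rw [this]
        have : r j ω * Y ω - Y ω * r j ω = 0 := by ring
        rw [this]
        positivity
      · have : g j ω = 0 := by simp [hg_def, h]
        rw [this]
        push_neg at h
        have h1 : (1:ℝ) ≤ Real.exp (r j ω - C * M j) := by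
          have := Real.add_one_le_exp (r j ω - C * M j); linarith
        have h2 : r j ω * Y ω ≤ r j ω := by nlinarith [hY1 ω, hY0 ω]
        nlinarith
    have hre1_val : ∫ ω, r j ω * Real.exp (r j ω - 1) ∂(Q j) = 1 + D j := by
      have hDv : D j = ∫ ω, (r j ω * Real.exp (r j ω - 1) - 1) ∂(Q j) := by
        rw [hD_def]
      have : D j = ∫ ω, r j ω * Real.exp (r j ω - 1) ∂(Q j) - 1 := by
        rw [hDv, integral_sub (hre1_int j) (integrable_const 1)]
        simp
      linarith
    have hstep2 : ∫ ω, r j ω * Real.exp (r j ω - C * M j) ∂(Q j)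
        = Real.exp (1 - C * M j) * (1 + D j) := by
      have hcongr : ∫ ω, r j ω * Real.exp (r j ω - C * M j) ∂(Q j)
          = ∫ ω, Real.exp (1 - C * M j) * (r j ω * Real.exp (r j ω - 1)) ∂(Q j) := by
        refine integral_congr_ae (Filter.Eventually.of_forall fun ω => ?_)
        have hee : Real.exp (r j ω - C * M j)
            = Real.exp (1 - C * M j) * Real.exp (r j ω - 1) := by
          rw [← Real.exp_add]
          ring_nf
        simp only [hee]
        ring
      rw [hcongr, integral_const_mul, hre1_val]
    have hstep3 : Real.exp (1 - C * M j) * (1 + D j) ≤ ε / 2 := by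
      have hL0 : 0 ≤ Real.log (1 + D j) := Real.log_nonneg (by linarith [hD0 j])
      have hDL : 1 + D j = Real.exp (Real.log (1 + D j)) :=
        (Real.exp_log (by linarith [hD0 j])).symm
      have hkey : Real.exp (1 - C * M j) * (1 + D j)
          = Real.exp (1 - C * M j + Real.log (1 + D j)) := by
        rw [Real.exp_add, Real.exp_log (by linarith [hD0 j])]
      have hexple : 1 - C * M j + Real.log (1 + D j) ≤ 1 - C := by
        rw [hMD j]
        nlinarith
      have hval : Real.exp (1 - C) = Real.exp 1 * (ε / 2) ^ 2 := by
        have hε2 : (0:ℝ) < ε / 2 := by linarith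
        have hlog : Real.log (2 / ε) = - Real.log (ε / 2) := by
          rw [← Real.log_inv]
          congr 1
          field_simp
        rw [hC_def, hlog]
        have h3 : (1 : ℝ) - 2 * -Real.log (ε / 2)
            = 1 + (Real.log (ε/2) + Real.log (ε/2)) := by ring
        rw [h3, Real.exp_add, Real.exp_add, Real.exp_log hε2]
        ring
      have hfin : Real.exp 1 * (ε / 2) ^ 2 ≤ ε / 2 := by
        have h1 : Real.exp 1 * ε ≤ 2 := by
          have h2 := mul_le_mul_of_nonneg_left hε1 (Real.exp_pos 1).le
          calc Real.exp 1 * ε ≤ Real.exp 1 * (2 / Real.exp 1) := h2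
            _ = 2 := by field_simp
        nlinarith [Real.exp_pos 1, hε0.le]
      calc Real.exp (1 - C * M j) * (1 + D j)
          = Real.exp (1 - C * M j + Real.log (1 + D j)) := hkey
        _ ≤ Real.exp (1 - C) := Real.exp_le_exp.mpr hexple
        _ = Real.exp 1 * (ε / 2) ^ 2 := hval
        _ ≤ ε / 2 := hfin
    linarith
  have hbdd_int : ∀ j (s : Fin (τ j)),
      Integrable (fun ω' => g j (X j s ω')) Pr := by
    intro j s
    refine (integrable_const (C * M j)).mono'
      ((hg_meas j).comp (hX_meas j s)).aestronglyMeasurable ?_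
    filter_upwards with ω'
    set ω := X j s ω'
    rw [Real.norm_eq_abs, abs_of_nonneg (hg_nonneg j ω)]
    by_cases h : r j ω ≤ C * M j
    · have : g j ω = Y ω * r j ω := by simp [hg_def, h]
      rw [this]
      nlinarith [hY0 ω, hY1 ω, hr_nonneg j ω]
    · have : g j ω = 0 := by simp [hg_def, h]
      rw [this]
      nlinarith [hMpos j, hC2]
  have hgX_val : ∀ j (s : Fin (τ j)), ∫ ω', g j (X j s ω') ∂Pr = I j := by
    intro j s
    have : I j = ∫ ω, g j ω ∂(Measure.map (X j s) Pr) := by rw [hX_dist j s]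
    rw [this, integral_map (hX_meas j s).aemeasurable
      (hg_meas j).aestronglyMeasurable]
  have hE : ∫ ω', Yhat ω' ∂Pr = (1 / Z) * ∑ j, ((τ j : ℝ) / M j) * I j := by
    have hrw : ∀ ω', Yhat ω' = (1 / Z) * ∑ j, ∑ s : Fin (τ j),
        (1 / M j) * g j (X j s ω') := by
      intro ω'
      rw [hYhat ω']
    have h1 : ∫ ω', Yhat ω' ∂Pr
        = (1 / Z) * ∫ ω', ∑ j, ∑ s : Fin (τ j), (1 / M j) * g j (X j s ω') ∂Pr := by
      rw [← integral_const_mul]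
      exact integral_congr_ae (Filter.Eventually.of_forall hrw)
    rw [h1]
    congr 1
    rw [integral_finset_sum _ (fun j _ => integrable_finset_sum _
      (fun s _ => (hbdd_int j s).const_mul (1 / M j)))]
    refine Finset.sum_congr rfl fun j _ => ?_
    rw [integral_finset_sum _ (fun s _ => (hbdd_int j s).const_mul (1 / M j))]
    have h2 : ∀ s : Fin (τ j), ∫ ω', (1 / M j) * g j (X j s ω') ∂Pr
        = (1 / M j) * I j := by
      intro s
      rw [integral_const_mul, hgX_val j s]
    rw [Finset.sum_congr rfl fun s _ => h2 s]
    simp only [Finset.sum_const, Finset.card_univ, Fintype.card_fin, nsmul_eq_mul]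
    ring
  have hw0 : ∀ j, (0:ℝ) ≤ (τ j : ℝ) / M j := fun j =>
    div_nonneg (Nat.cast_nonneg _) (hMpos j).le
  have hZpos : 0 < Z := by
    obtain ⟨j0, hj0⟩ : ∃ j, τ j ≠ 0 := by
      by_contra h
      push_neg at h
      have : ∑ j, τ j = 0 := Finset.sum_eq_zero fun j _ => h j
      omega
    have hj0' : (0:ℝ) < (τ j0 : ℝ) / M j0 :=
      div_pos (by exact_mod_cast Nat.pos_of_ne_zero hj0) (hMpos j0)
    rw [hZ]
    calc (0:ℝ) < (τ j0 : ℝ) / M j0 := hj0'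
      _ ≤ ∑ j, (τ j : ℝ) / M j :=
        Finset.single_le_sum (fun j _ => hw0 j) (Finset.mem_univ j0)
  constructor
  · rw [hE]
    have hsum : ∑ j, ((τ j : ℝ) / M j) * I j ≤ Z * μ := by
      rw [hZ, Finset.sum_mul]
      exact Finset.sum_le_sum fun j _ =>
        mul_le_mul_of_nonneg_left (hI_le_μ j) (hw0 j)
    calc (1 / Z) * ∑ j, ((τ j : ℝ) / M j) * I j ≤ (1 / Z) * (Z * μ) :=
        mul_le_mul_of_nonneg_left hsum (by positivity)
      _ = μ := by field_simp
  · rw [hE]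
    have hsum : Z * μ ≤ (∑ j, ((τ j : ℝ) / M j) * I j) + Z * (ε / 2) := by
      calc Z * μ = ∑ j, ((τ j : ℝ) / M j) * μ := by rw [hZ, Finset.sum_mul]
        _ ≤ ∑ j, (((τ j : ℝ) / M j) * I j + ((τ j : ℝ) / M j) * (ε / 2)) := by
            refine Finset.sum_le_sum fun j _ => ?_
            rw [← mul_add]
            exact mul_le_mul_of_nonneg_left (hμ_le j) (hw0 j)
        _ = (∑ j, ((τ j : ℝ) / M j) * I j) + (∑ j, ((τ j : ℝ) / M j)) * (ε / 2) := by
            rw [Finset.sum_add_distrib, Finset.sum_mul]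
        _ = (∑ j, ((τ j : ℝ) / M j) * I j) + Z * (ε / 2) := by rw [← hZ]
    calc μ = (1 / Z) * (Z * μ) := by field_simp
      _ ≤ (1 / Z) * ((∑ j, ((τ j : ℝ) / M j) * I j) + Z * (ε / 2)) :=
        mul_le_mul_of_nonneg_left hsum (by positivity)
      _ = (1 / Z) * (∑ j, ((τ j : ℝ) / M j) * I j) + ε / 2 := by
        field_simp
end

section
/- (Concentration of the aggregated multi-arm clipped estimator.) For every δ > 0, the probability of the event { μ − δ − ε/2 ≤ Ŷ ≤ μ + δ } is at least 1 − 2·exp( −(δ²·τ/(8·(log(2/ε))²))·(Z/τ)² ), where μ = ∫ Y dP. -/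
open MeasureTheory ProbabilityTheory

section Aux
open Real

lemma mgf_bdd_centered {Ω : Type*} [MeasurableSpace Ω] {ν : Measure Ω} [IsProbabilityMeasure ν]
    {X : Ω → ℝ} (hX : Measurable X) {B : ℝ} (hB : 0 < B)
    (hbd : ∀ ω, |X ω| ≤ B) (hcen : ∫ ω, X ω ∂ν = 0) (t : ℝ) :
    mgf X ν t ≤ Real.exp (t ^ 2 * B ^ 2 / 2) := by
  have hXint : Integrable X ν :=
    (integrable_const B).mono' hX.aestronglyMeasurable
      (Filter.Eventually.of_forall fun ω => by rw [Real.norm_eq_abs]; exact hbd ω)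
  have hpt : ∀ ω, Real.exp (t * X ω) ≤
      Real.cosh (t * B) + (X ω / B) * Real.sinh (t * B) := by
    intro ω
    set x := X ω with hx
    obtain ⟨hx1, hx2⟩ := abs_le.mp (hbd ω)
    set a : ℝ := (B + x) / (2 * B) with ha
    have ha0 : 0 ≤ a := by
      apply div_nonneg (by linarith) (by linarith)
    have hb0 : 0 ≤ 1 - a := by
      rw [sub_nonneg, ha, div_le_one (by linarith)]; linarith
    have hab : a + (1 - a) = 1 := by ring
    have hconv := convexOn_exp.2 (Set.mem_univ (t * B)) (Set.mem_univ (-(t * B)))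
      ha0 hb0 hab
    have harg : a • (t * B) + (1 - a) • (-(t * B)) = t * x := by
      simp only [smul_eq_mul, ha]
      field_simp
      ring
    rw [harg] at hconv
    refine hconv.trans (le_of_eq ?_)
    rw [Real.cosh_eq, Real.sinh_eq, Real.exp_neg, ha]
    simp only [smul_eq_mul]
    have hB0 : B ≠ 0 := hB.ne'
    field_simp
    ring
  have hexp_int : Integrable (fun ω => Real.exp (t * X ω)) ν := by
    refine (integrable_const (Real.exp (|t| * B))).mono'
      ((hX.const_mul t).exp).aestronglyMeasurable
      (Filter.Eventually.of_forall fun ω => ?_)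
    rw [Real.norm_eq_abs, Real.abs_exp]
    apply Real.exp_le_exp.mpr
    calc t * X ω ≤ |t * X ω| := le_abs_self _
      _ = |t| * |X ω| := abs_mul _ _
      _ ≤ |t| * B := by gcongr; exact hbd ω
  have hrhs_int : Integrable
      (fun ω => Real.cosh (t * B) + (X ω / B) * Real.sinh (t * B)) ν :=
    (integrable_const _).add ((hXint.div_const B).mul_const _)
  calc mgf X ν t = ∫ ω, Real.exp (t * X ω) ∂ν := rfl
    _ ≤ ∫ ω, (Real.cosh (t * B) + (X ω / B) * Real.sinh (t * B)) ∂ν :=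
        integral_mono hexp_int hrhs_int hpt
    _ = Real.cosh (t * B) := by
        rw [integral_add (integrable_const _) ((hXint.div_const B).mul_const _),
          integral_const, MeasureTheory.integral_mul_const, integral_div, hcen]
        simp
    _ ≤ Real.exp ((t * B) ^ 2 / 2) := Real.cosh_le_exp_half_sq _
    _ = Real.exp (t ^ 2 * B ^ 2 / 2) := by rw [mul_pow]

lemma chernoff_sum_bdd {Ω' : Type*} [MeasurableSpace Ω'] {Pr : Measure Ω'}
    [IsProbabilityMeasure Pr] {ι : Type*} [Fintype ι] {U : ι → Ω' → ℝ}
    (hmeas : ∀ i, Measurable (U i))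
    (hindep : iIndepFun U Pr)
    {B : ℝ} (hB : 0 < B) (hbd : ∀ i ω, |U i ω| ≤ B)
    (hcen : ∀ i, ∫ ω, U i ω ∂Pr = 0)
    (hcard : 0 < Fintype.card ι)
    {a : ℝ} (ha : 0 < a) :
    (Pr {ω' | a ≤ ∑ i, U i ω'}).toReal ≤
      Real.exp (-(a ^ 2 / (2 * (Fintype.card ι : ℝ) * B ^ 2))) := by
  set n : ℝ := (Fintype.card ι : ℝ) with hn
  have hn0 : 0 < n := by rw [hn]; exact_mod_cast hcard
  set t : ℝ := a / (n * B ^ 2) with ht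
  have ht0 : 0 < t := by positivity
  have hexp_int : ∀ i, Integrable (fun ω => Real.exp (t * U i ω)) Pr := by
    intro i
    refine (integrable_const (Real.exp (|t| * B))).mono'
      ((hmeas i).const_mul t).exp.aestronglyMeasurable
      (Filter.Eventually.of_forall fun ω => ?_)
    rw [Real.norm_eq_abs, Real.abs_exp]
    apply Real.exp_le_exp.mpr
    calc t * U i ω ≤ |t * U i ω| := le_abs_self _
      _ = |t| * |U i ω| := abs_mul _ _
      _ ≤ |t| * B := by gcongr; exact hbd i ω
  have hsum_int : Integrable (fun ω => Real.exp (t * (∑ i, U i) ω)) Pr :=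
    hindep.integrable_exp_mul_sum hmeas (fun i _ => hexp_int i)
  have hset : {ω' | a ≤ ∑ i, U i ω'} = {ω' | a ≤ (∑ i, U i) ω'} := by
    ext ω'; simp [Finset.sum_apply]
  rw [hset]
  calc (Pr {ω' | a ≤ (∑ i, U i) ω'}).toReal
      ≤ Real.exp (-t * a) * mgf (∑ i, U i) Pr t :=
        measure_ge_le_exp_mul_mgf a ht0.le hsum_int
    _ = Real.exp (-t * a) * ∏ i, mgf (U i) Pr t := by
        rw [hindep.mgf_sum hmeas]
    _ ≤ Real.exp (-t * a) * ∏ i : ι, Real.exp (t ^ 2 * B ^ 2 / 2) := by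
        gcongr
        · exact fun i _ => mgf_nonneg
        · exact mgf_bdd_centered (hmeas _) hB (hbd _) (hcen _) t
    _ = Real.exp (-t * a + n * (t ^ 2 * B ^ 2 / 2)) := by
        rw [Finset.prod_const, ← Real.exp_nat_mul, ← Real.exp_add, Finset.card_univ]
    _ = Real.exp (-(a ^ 2 / (2 * n * B ^ 2))) := by
        congr 1
        rw [ht]
        field_simp
        ring

end Aux


set_option maxHeartbeats 1600000 in
/-- Concentration of the aggregated multi-arm clipped importance-sampling estimator:
for every `δ > 0`, with probability at least
`1 − 2·exp(−(δ²τ/(8·(log(2/ε))²))·(Z/τ)²)` the estimator `Ŷ` lies in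
`[μ − δ − ε/2, μ + δ]`, where `μ = ∫ Y dP`, `τ = Σ_j τ_j` and `Z = Σ_j τ_j/M_j`. -/
theorem stmt8 {Ω : Type*} [mΩ : MeasurableSpace Ω]
    (K : ℕ) (hK : 1 ≤ K)
    (P : Measure Ω) [IsProbabilityMeasure P]
    (Q : Fin K → Measure Ω) [∀ j, IsProbabilityMeasure (Q j)]
    (r : Fin K → Ω → ℝ)
    (hr_meas : ∀ j, Measurable (r j)) (hr_nonneg : ∀ j ω, 0 ≤ r j ω)
    (hPQ : ∀ j, ∀ A : Set Ω, MeasurableSet A → (P A).toReal = ∫ ω in A, r j ω ∂(Q j))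
    (hD_int : ∀ j, Integrable (fun ω => r j ω * Real.exp (r j ω)) (Q j))
    (M : Fin K → ℝ)
    (hM : ∀ j, M j = 1 + Real.log (1 + ∫ ω, (r j ω * Real.exp (r j ω - 1) - 1) ∂(Q j)))
    (Y : Ω → ℝ) (hY_meas : Measurable Y)
    (hY0 : ∀ ω, 0 ≤ Y ω) (hY1 : ∀ ω, Y ω ≤ 1)
    (τ : Fin K → ℕ) (hτ : 1 ≤ ∑ j, τ j)
    (Z : ℝ) (hZ : Z = ∑ j, (τ j : ℝ) / M j)
    (ε : ℝ) (hε0 : 0 < ε) (hε1 : ε ≤ 2 / Real.exp 1)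
    {Ω' : Type*} [MeasurableSpace Ω'] (Pr : Measure Ω') [IsProbabilityMeasure Pr]
    (X : (j : Fin K) → Fin (τ j) → Ω' → Ω)
    (hX_meas : ∀ j s, Measurable (X j s))
    (hX_indep : iIndepFun
      (fun p : (j : Fin K) × Fin (τ j) => X p.1 p.2) Pr)
    (hX_dist : ∀ j s, Measure.map (X j s) Pr = Q j)
    (Yhat : Ω' → ℝ)
    (hYhat : ∀ ω', Yhat ω' = (1 / Z) * ∑ j, ∑ s,
      (1 / M j) * (if r j (X j s ω') ≤ 2 * Real.log (2 / ε) * M j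
        then Y (X j s ω') * r j (X j s ω') else 0))
    (δ : ℝ) (hδ : 0 < δ) :
    1 - 2 * Real.exp (-(δ ^ 2 * (∑ j, τ j : ℕ) / (8 * Real.log (2 / ε) ^ 2)) *
        (Z / (∑ j, τ j : ℕ)) ^ 2) ≤
      (Pr {ω' | (∫ ω, Y ω ∂P) - δ - ε / 2 ≤ Yhat ω' ∧
        Yhat ω' ≤ (∫ ω, Y ω ∂P) + δ}).toReal := by
  classical
  set μval : ℝ := ∫ ω, Y ω ∂P with hμval
  have hε2 : (0:ℝ) < 2 / ε := by positivity
  set L : ℝ := Real.log (2 / ε) with hLdef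
  have hL1 : 1 ≤ L := by
    rw [hLdef, Real.le_log_iff_exp_le hε2, le_div_iff₀ hε0, mul_comm]
    rw [le_div_iff₀ (Real.exp_pos 1)] at hε1
    linarith
  set c : ℝ := 2 * L with hcdef
  have hc0 : 0 < c := by rw [hcdef]; linarith
  -- integrability facts per arm
  have hr_int : ∀ j, Integrable (r j) (Q j) := by
    intro j
    refine (hD_int j).mono' (hr_meas j).aestronglyMeasurable
      (Filter.Eventually.of_forall fun ω => ?_)
    rw [Real.norm_eq_abs, abs_of_nonneg (hr_nonneg j ω)]
    nlinarith [Real.one_le_exp (hr_nonneg j ω), hr_nonneg j ω]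
  have hre_int : ∀ j, Integrable (fun ω => r j ω * Real.exp (r j ω - 1)) (Q j) := by
    intro j
    have : (fun ω => r j ω * Real.exp (r j ω - 1))
        = fun ω => (r j ω * Real.exp (r j ω)) * Real.exp (-1) := by
      funext ω
      rw [mul_assoc, ← Real.exp_add]
      ring_nf
    rw [this]
    exact (hD_int j).mul_const _
  have hint1 : ∀ j, ∫ ω, r j ω ∂(Q j) = 1 := by
    intro j
    have := hPQ j Set.univ MeasurableSet.univ
    rw [Measure.restrict_univ] at this
    rw [← this]
    simp
  have hD0 : ∀ j, 0 ≤ ∫ ω, (r j ω * Real.exp (r j ω - 1) - 1) ∂(Q j) := by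
    intro j
    rw [integral_sub (hre_int j) (integrable_const 1), sub_nonneg]
    have h2 : ∫ ω, (2 * r j ω - 1) ∂(Q j) = 1 := by
      rw [integral_sub ((hr_int j).const_mul 2) (integrable_const 1),
        MeasureTheory.integral_const_mul, hint1 j]
      simp
      norm_num
    calc ∫ ω, (1:ℝ) ∂(Q j) = ∫ ω, (2 * r j ω - 1) ∂(Q j) := by rw [h2]; simp
      _ ≤ ∫ ω, r j ω * Real.exp (r j ω - 1) ∂(Q j) := by
          refine integral_mono (((hr_int j).const_mul 2).sub (integrable_const 1))
            (hre_int j) fun ω => ?_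
          have h1 : r j ω ≤ Real.exp (r j ω - 1) := by
            have := Real.add_one_le_exp (r j ω - 1); linarith
          nlinarith [hr_nonneg j ω, sq_nonneg (r j ω - 1),
            mul_le_mul_of_nonneg_left h1 (hr_nonneg j ω)]
  have hM1 : ∀ j, 1 ≤ M j := by
    intro j
    rw [hM j]
    have h : (1:ℝ) ≤ 1 + ∫ ω, (r j ω * Real.exp (r j ω - 1) - 1) ∂(Q j) := by
      linarith [hD0 j]
    linarith [Real.log_nonneg h]
  have hM0 : ∀ j, 0 < M j := fun j => lt_of_lt_of_le one_pos (hM1 j)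
  have hexpM : ∀ j, ∫ ω, r j ω * Real.exp (r j ω - 1) ∂(Q j) = Real.exp (M j - 1) := by
    intro j
    have hDval : ∫ ω, r j ω * Real.exp (r j ω - 1) ∂(Q j)
        = 1 + ∫ ω, (r j ω * Real.exp (r j ω - 1) - 1) ∂(Q j) := by
      rw [integral_sub (hre_int j) (integrable_const 1)]
      simp
    have hMm1 : M j - 1
        = Real.log (1 + ∫ ω, (r j ω * Real.exp (r j ω - 1) - 1) ∂(Q j)) := by
      rw [hM j]; ring
    rw [hDval, hMm1, Real.exp_log (by linarith [hD0 j])]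
  -- P = Q j withDensity r j, hence μ = ∫ Y r dQ j
  have hP_eq : ∀ j, P = (Q j).withDensity (fun ω => ENNReal.ofReal (r j ω)) := by
    intro j
    ext A hA
    rw [withDensity_apply _ hA,
      ← ofReal_integral_eq_lintegral_ofReal ((hr_int j).restrict)
        (Filter.Eventually.of_forall fun ω => hr_nonneg j ω),
      ← hPQ j A hA, ENNReal.ofReal_toReal (measure_ne_top P A)]
  have hμr : ∀ j, μval = ∫ ω, Y ω * r j ω ∂(Q j) := by
    intro j
    rw [hμval, hP_eq j]
    rw [show (fun ω => ENNReal.ofReal (r j ω))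
        = (fun ω => ((Real.toNNReal (r j ω) : NNReal) : ENNReal)) from rfl]
    rw [integral_withDensity_eq_integral_smul (hr_meas j).real_toNNReal Y]
    congr 1
    funext ω
    rw [NNReal.smul_def, smul_eq_mul, Real.coe_toNNReal _ (hr_nonneg j ω), mul_comm]
  -- clipped integrals
  set I : Fin K → ℝ :=
    fun j => ∫ ω, (if r j ω ≤ c * M j then Y ω * r j ω else 0) ∂(Q j) with hIdef
  have hite_meas : ∀ j,
      Measurable fun ω => (if r j ω ≤ c * M j then Y ω * r j ω else 0) := fun j =>
    Measurable.ite (measurableSet_le (hr_meas j) measurable_const)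
      (hY_meas.mul (hr_meas j)) measurable_const
  have hite_nonneg : ∀ j ω, 0 ≤ (if r j ω ≤ c * M j then Y ω * r j ω else 0) := by
    intro j ω
    split
    · exact mul_nonneg (hY0 ω) (hr_nonneg j ω)
    · exact le_refl 0
  have hite_le : ∀ j ω, (if r j ω ≤ c * M j then Y ω * r j ω else 0) ≤ Y ω * r j ω := by
    intro j ω
    split
    · exact le_refl _
    · exact mul_nonneg (hY0 ω) (hr_nonneg j ω)
  have hYr_le_r : ∀ j ω, Y ω * r j ω ≤ r j ω := by
    intro j ω
    calc Y ω * r j ω ≤ 1 * r j ω := by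
          exact mul_le_mul_of_nonneg_right (hY1 ω) (hr_nonneg j ω)
      _ = r j ω := one_mul _
  have hYr_int : ∀ j, Integrable (fun ω => Y ω * r j ω) (Q j) := by
    intro j
    refine (hr_int j).mono' ((hY_meas.mul (hr_meas j)).aestronglyMeasurable)
      (Filter.Eventually.of_forall fun ω => ?_)
    rw [Real.norm_eq_abs, abs_of_nonneg (mul_nonneg (hY0 ω) (hr_nonneg j ω))]
    exact hYr_le_r j ω
  have hite_int : ∀ j,
      Integrable (fun ω => (if r j ω ≤ c * M j then Y ω * r j ω else 0)) (Q j) := by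
    intro j
    refine (hr_int j).mono' (hite_meas j).aestronglyMeasurable
      (Filter.Eventually.of_forall fun ω => ?_)
    rw [Real.norm_eq_abs, abs_of_nonneg (hite_nonneg j ω)]
    exact (hite_le j ω).trans (hYr_le_r j ω)
  have hIub : ∀ j, I j ≤ μval := by
    intro j
    rw [hIdef, hμr j]
    exact integral_mono (hite_int j) (hYr_int j) (hite_le j)
  have hI0 : ∀ j, 0 ≤ I j := fun j => integral_nonneg (hite_nonneg j)
  have hIlb : ∀ j, μval - ε / 2 ≤ I j := by
    intro j
    have key : μval - I j ≤ Real.exp (M j - c * M j) := by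
      have heq : μval - I j = ∫ ω,
          (Y ω * r j ω - (if r j ω ≤ c * M j then Y ω * r j ω else 0)) ∂(Q j) := by
        rw [integral_sub (hYr_int j) (hite_int j), ← hμr j]
      rw [heq]
      have hb : ∀ ω, Y ω * r j ω - (if r j ω ≤ c * M j then Y ω * r j ω else 0)
          ≤ Real.exp (1 - c * M j) * (r j ω * Real.exp (r j ω - 1)) := by
        intro ω
        have hRnn : 0 ≤ Real.exp (1 - c * M j) * (r j ω * Real.exp (r j ω - 1)) :=
          mul_nonneg (Real.exp_pos _).le
            (mul_nonneg (hr_nonneg j ω) (Real.exp_pos _).le)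
        by_cases h : r j ω ≤ c * M j
        · simp only [h, if_true, sub_self]
          exact hRnn
        · simp only [h, if_false, sub_zero]
          push_neg at h
          have hE : Real.exp (1 - c * M j) * (r j ω * Real.exp (r j ω - 1))
              = r j ω * Real.exp (r j ω - c * M j) := by
            rw [mul_comm (Real.exp (1 - c * M j)), mul_assoc, ← Real.exp_add]
            ring_nf
          rw [hE]
          calc Y ω * r j ω ≤ r j ω := hYr_le_r j ω
            _ = r j ω * 1 := (mul_one _).symm
            _ ≤ r j ω * Real.exp (r j ω - c * M j) := by
                refine mul_le_mul_of_nonneg_left ?_ (hr_nonneg j ω)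
                exact Real.one_le_exp (by linarith)
      calc ∫ ω, (Y ω * r j ω - (if r j ω ≤ c * M j then Y ω * r j ω else 0)) ∂(Q j)
          ≤ ∫ ω, Real.exp (1 - c * M j) * (r j ω * Real.exp (r j ω - 1)) ∂(Q j) :=
            integral_mono ((hYr_int j).sub (hite_int j)) ((hre_int j).const_mul _) hb
        _ = Real.exp (1 - c * M j) * Real.exp (M j - 1) := by
            rw [MeasureTheory.integral_const_mul, hexpM j]
        _ = Real.exp (M j - c * M j) := by rw [← Real.exp_add]; ring_nf
    have hexp_le : Real.exp (M j - c * M j) ≤ ε / 2 := by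
      have h1 : M j - c * M j ≤ -L := by nlinarith [hM1 j, hL1]
      calc Real.exp (M j - c * M j) ≤ Real.exp (-L) := Real.exp_le_exp.mpr h1
        _ = ε / 2 := by
            rw [hLdef, Real.exp_neg, Real.exp_log hε2, inv_div]
    linarith
  -- per-pair random variables
  set g : Fin K → Ω → ℝ := fun j ω =>
    (1 / M j) * (if r j ω ≤ c * M j then Y ω * r j ω else 0) with hgdef
  have hg_meas : ∀ j, Measurable (g j) := fun j => (hite_meas j).const_mul _
  have hg_nonneg : ∀ j ω, 0 ≤ g j ω := fun j ω =>
    mul_nonneg (one_div_nonneg.mpr (hM0 j).le) (hite_nonneg j ω)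
  have hg_le : ∀ j ω, g j ω ≤ c := by
    intro j ω
    have h1 : (if r j ω ≤ c * M j then Y ω * r j ω else 0) ≤ c * M j := by
      split
      · next h => exact le_trans (hYr_le_r j ω) h
      · exact mul_nonneg hc0.le (hM0 j).le
    calc g j ω ≤ (1 / M j) * (c * M j) :=
          mul_le_mul_of_nonneg_left h1 (one_div_nonneg.mpr (hM0 j).le)
      _ = c := by
          rw [one_div, inv_mul_eq_div]
          exact mul_div_cancel_right₀ c (hM0 j).ne'
  set m : Fin K → ℝ := fun j => (1 / M j) * I j with hmdef
  have hgint : ∀ j, ∫ ω, g j ω ∂(Q j) = m j := by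
    intro j
    rw [hgdef]
    simp only []
    rw [MeasureTheory.integral_const_mul]
  have hm0 : ∀ j, 0 ≤ m j := fun j =>
    mul_nonneg (one_div_nonneg.mpr (hM0 j).le) (hI0 j)
  have hmc : ∀ j, m j ≤ c := by
    intro j
    rw [← hgint j]
    calc ∫ ω, g j ω ∂(Q j) ≤ ∫ _ω, c ∂(Q j) :=
          integral_mono (by
            refine (integrable_const c).mono' (hg_meas j).aestronglyMeasurable
              (Filter.Eventually.of_forall fun ω => ?_)
            rw [Real.norm_eq_abs, abs_of_nonneg (hg_nonneg j ω)]
            exact hg_le j ω) (integrable_const c) (hg_le j)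
      _ = c := by simp
  set V : ((j : Fin K) × Fin (τ j)) → Ω' → ℝ :=
    fun p ω' => g p.1 (X p.1 p.2 ω') with hVdef
  have hV_meas : ∀ p, Measurable (V p) := fun p => (hg_meas p.1).comp (hX_meas p.1 p.2)
  have hV_nonneg : ∀ p ω', 0 ≤ V p ω' := fun p ω' => hg_nonneg p.1 _
  have hV_le : ∀ p ω', V p ω' ≤ c := fun p ω' => hg_le p.1 _
  have hV_int : ∀ p, Integrable (V p) Pr := by
    intro p
    refine (integrable_const c).mono' (hV_meas p).aestronglyMeasurable
      (Filter.Eventually.of_forall fun ω' => ?_)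
    rw [Real.norm_eq_abs, abs_of_nonneg (hV_nonneg p ω')]
    exact hV_le p ω'
  have hEV : ∀ p, ∫ ω', V p ω' ∂Pr = m p.1 := by
    intro p
    have h1 : ∫ ω', V p ω' ∂Pr = ∫ ω, g p.1 ω ∂(Measure.map (X p.1 p.2) Pr) := by
      rw [integral_map (hX_meas p.1 p.2).aemeasurable (hg_meas p.1).aestronglyMeasurable]
    rw [h1, hX_dist p.1 p.2, hgint]
  -- sums and means
  have hNpos : (0:ℝ) < ((∑ j, τ j : ℕ) : ℝ) := by exact_mod_cast hτ
  set N : ℝ := ((∑ j, τ j : ℕ) : ℝ) with hNdef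
  have hcard : (Fintype.card ((j : Fin K) × Fin (τ j)) : ℝ) = N := by
    rw [hNdef]
    norm_cast
    simp [Fintype.card_sigma]
  have hcard0 : 0 < Fintype.card ((j : Fin K) × Fin (τ j)) := by
    have : (0:ℝ) < (Fintype.card ((j : Fin K) × Fin (τ j)) : ℝ) := by
      rw [hcard]; exact hNpos
    exact_mod_cast this
  have hZpos : 0 < Z := by
    rw [hZ]
    obtain ⟨j0, hj0⟩ : ∃ j, 0 < τ j := by
      by_contra h
      push_neg at h
      have : ∑ j, τ j = 0 := Finset.sum_eq_zero fun j _ => Nat.le_zero.mp (h j)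
      omega
    exact Finset.sum_pos' (fun j _ => div_nonneg (Nat.cast_nonneg _) (hM0 j).le)
      ⟨j0, Finset.mem_univ _, div_pos (by exact_mod_cast hj0) (hM0 j0)⟩
  set msum : ℝ := ∑ p : ((j : Fin K) × Fin (τ j)), m p.1 with hmsumdef
  have hmsum_eq : msum = ∑ j, (τ j : ℝ) * m j := by
    rw [hmsumdef, ← Finset.univ_sigma_univ, Finset.sum_sigma]
    simp [Finset.sum_const, nsmul_eq_mul]
  have hmsum_ub : msum ≤ μval * Z := by
    rw [hmsum_eq, hZ, Finset.mul_sum]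
    refine Finset.sum_le_sum fun j _ => ?_
    have h1 : (τ j : ℝ) * m j = ((τ j : ℝ) / M j) * I j := by
      rw [hmdef]; field_simp
    rw [h1]
    have h2 := mul_le_mul_of_nonneg_left (hIub j)
      (div_nonneg (Nat.cast_nonneg (τ j)) (hM0 j).le)
    linarith [h2]
  have hmsum_lb : (μval - ε / 2) * Z ≤ msum := by
    rw [hmsum_eq, hZ, Finset.mul_sum]
    refine Finset.sum_le_sum fun j _ => ?_
    have h1 : (τ j : ℝ) * m j = ((τ j : ℝ) / M j) * I j := by
      rw [hmdef]; field_simp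
    rw [h1]
    have h2 := mul_le_mul_of_nonneg_left (hIlb j)
      (div_nonneg (Nat.cast_nonneg (τ j)) (hM0 j).le)
    linarith [h2]
  -- centered variables (both signs)
  set U : ((j : Fin K) × Fin (τ j)) → Ω' → ℝ := fun p ω' => V p ω' - m p.1 with hUdef
  set W : ((j : Fin K) × Fin (τ j)) → Ω' → ℝ := fun p ω' => m p.1 - V p ω' with hWdef
  have hU_meas : ∀ p, Measurable (U p) := fun p => (hV_meas p).sub measurable_const
  have hW_meas : ∀ p, Measurable (W p) := fun p => measurable_const.sub (hV_meas p)
  have hU_indep : iIndepFun U Pr :=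
    hX_indep.comp (fun p => fun x => g p.1 x - m p.1)
      (fun p => (hg_meas p.1).sub measurable_const)
  have hW_indep : iIndepFun W Pr :=
    hX_indep.comp (fun p => fun x => m p.1 - g p.1 x)
      (fun p => measurable_const.sub (hg_meas p.1))
  have hU_bd : ∀ p ω', |U p ω'| ≤ c := fun p ω' =>
    abs_le.mpr ⟨by
      have h1 := hV_nonneg p ω'; have h2 := hmc p.1
      simp only [hUdef]; linarith,
     by
      have h1 := hV_le p ω'; have h2 := hm0 p.1
      simp only [hUdef]; linarith⟩
  have hW_bd : ∀ p ω', |W p ω'| ≤ c := fun p ω' =>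
    abs_le.mpr ⟨by
      have h1 := hV_le p ω'; have h2 := hm0 p.1
      simp only [hWdef]; linarith,
     by
      have h1 := hV_nonneg p ω'; have h2 := hmc p.1
      simp only [hWdef]; linarith⟩
  have hU_cen : ∀ p, ∫ ω', U p ω' ∂Pr = 0 := by
    intro p
    simp only [hUdef]
    rw [integral_sub (hV_int p) (integrable_const _), hEV p, integral_const]
    simp
  have hW_cen : ∀ p, ∫ ω', W p ω' ∂Pr = 0 := by
    intro p
    simp only [hWdef]
    rw [integral_sub (integrable_const _) (hV_int p), hEV p, integral_const]
    simp
  set a : ℝ := δ * Z with hadef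
  have ha0 : 0 < a := mul_pos hδ hZpos
  have htu := chernoff_sum_bdd hU_meas hU_indep hc0 hU_bd hU_cen hcard0 ha0
  have htl := chernoff_sum_bdd hW_meas hW_indep hc0 hW_bd hW_cen hcard0 ha0
  have hexp_eq :
      Real.exp (-(a ^ 2 / (2 * (Fintype.card ((j : Fin K) × Fin (τ j)) : ℝ) * c ^ 2)))
      = Real.exp (-(δ ^ 2 * N / (8 * L ^ 2)) * (Z / N) ^ 2) := by
    congr 1
    rw [hcard, hadef, hcdef]
    have hL0 : L ≠ 0 := by linarith
    have hN0 : N ≠ 0 := ne_of_gt hNpos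
    field_simp
    ring
  rw [hexp_eq] at htu htl
  -- event inclusion
  have hsumU : ∀ ω', (∑ p, U p ω') = (∑ p, V p ω') - msum := by
    intro ω'
    simp only [hUdef]
    rw [Finset.sum_sub_distrib]
  have hsumW : ∀ ω', (∑ p, W p ω') = msum - (∑ p, V p ω') := by
    intro ω'
    simp only [hWdef]
    rw [Finset.sum_sub_distrib]
  have hYhatS : ∀ ω', Yhat ω' = (∑ p, V p ω') / Z := by
    intro ω'
    rw [hYhat ω', ← Finset.univ_sigma_univ, Finset.sum_sigma, one_div, inv_mul_eq_div]
  have hincl : ∀ ω', ω' ∉ {ω' | a ≤ ∑ p, U p ω'} → ω' ∉ {ω' | a ≤ ∑ p, W p ω'} →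
      ω' ∈ {ω' | μval - δ - ε / 2 ≤ Yhat ω' ∧ Yhat ω' ≤ μval + δ} := by
    intro ω' hu hl
    simp only [Set.mem_setOf_eq, not_le] at hu hl
    rw [hsumU ω'] at hu
    rw [hsumW ω'] at hl
    constructor
    · rw [hYhatS ω', le_div_iff₀ hZpos]
      linarith [hl, hmsum_lb, hadef]
    · rw [hYhatS ω', div_le_iff₀ hZpos]
      linarith [hu, hmsum_ub, hadef]
  have hcov : (Set.univ : Set Ω') ⊆
      {ω' | μval - δ - ε / 2 ≤ Yhat ω' ∧ Yhat ω' ≤ μval + δ}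
        ∪ ({ω' | a ≤ ∑ p, U p ω'} ∪ {ω' | a ≤ ∑ p, W p ω'}) := by
    intro ω' _
    by_cases hu : ω' ∈ {ω' | a ≤ ∑ p, U p ω'}
    · exact Or.inr (Or.inl hu)
    · by_cases hl : ω' ∈ {ω' | a ≤ ∑ p, W p ω'}
      · exact Or.inr (Or.inr hl)
      · exact Or.inl (hincl ω' hu hl)
  have h1 : (1:ENNReal) ≤ Pr {ω' | μval - δ - ε / 2 ≤ Yhat ω' ∧ Yhat ω' ≤ μval + δ}
      + (Pr {ω' | a ≤ ∑ p, U p ω'} + Pr {ω' | a ≤ ∑ p, W p ω'}) := by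
    calc (1:ENNReal) = Pr Set.univ := measure_univ.symm
      _ ≤ Pr ({ω' | μval - δ - ε / 2 ≤ Yhat ω' ∧ Yhat ω' ≤ μval + δ}
            ∪ ({ω' | a ≤ ∑ p, U p ω'} ∪ {ω' | a ≤ ∑ p, W p ω'})) := measure_mono hcov
      _ ≤ Pr {ω' | μval - δ - ε / 2 ≤ Yhat ω' ∧ Yhat ω' ≤ μval + δ}
            + Pr ({ω' | a ≤ ∑ p, U p ω'} ∪ {ω' | a ≤ ∑ p, W p ω'}) := measure_union_le _ _
      _ ≤ _ := add_le_add_right (measure_union_le _ _) _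
  have h2 : (1:ℝ) ≤ (Pr {ω' | μval - δ - ε / 2 ≤ Yhat ω' ∧ Yhat ω' ≤ μval + δ}).toReal
      + ((Pr {ω' | a ≤ ∑ p, U p ω'}).toReal + (Pr {ω' | a ≤ ∑ p, W p ω'}).toReal) := by
    have h3 := ENNReal.toReal_mono (ENNReal.add_ne_top.mpr ⟨measure_ne_top _ _,
      ENNReal.add_ne_top.mpr ⟨measure_ne_top _ _, measure_ne_top _ _⟩⟩) h1
    rwa [ENNReal.toReal_one,
      ENNReal.toReal_add (measure_ne_top _ _)
        (ENNReal.add_ne_top.mpr ⟨measure_ne_top _ _, measure_ne_top _ _⟩),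
      ENNReal.toReal_add (measure_ne_top _ _) (measure_ne_top _ _)] at h3
  linarith [htu, htl, h2]
end
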